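/- arXiv:1701.02813 — 3 statements merged into one kernel-verified Lean document; each statement's English description precedes it below -/
import Mathlib

section
/- Define the operator 𝓛 on functions g : [0,1] → ℝ by 𝓛g(x) = ((x+3)/4)·g((x+2)/3)³ + 2·((x+2)/4)·(g((x+1)/3)² − g((x+2)/3)·g((x+1)/3)²) + ((x+1)/4)·(g(x/3) − 2·g((x+1)/3)·g(x/3) − g((x+2)/3)²·g(x/3) + 2·g((x+2)/3)·g((x+1)/3)·g(x/3)). If g : [0,1] → [0,1] is monotone increasing, then 𝓛g(1) = 1 whenever g(1) = 1, and 0 ≤ 𝓛g(x) ≤ 1 for all x ∈ [0,1]. -/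
noncomputable def Lop (g : ℝ → ℝ) (x : ℝ) : ℝ :=
  ((x+3)/4) * g ((x+2)/3)^3
  + 2 * ((x+2)/4) * (g ((x+1)/3)^2 - g ((x+2)/3) * g ((x+1)/3)^2)
  + ((x+1)/4) * (g (x/3) - 2 * g ((x+1)/3) * g (x/3)
      - g ((x+2)/3)^2 * g (x/3) + 2 * g ((x+2)/3) * g ((x+1)/3) * g (x/3))

theorem stmt4 (g : ℝ → ℝ) (hmem : ∀ x ∈ Set.Icc (0:ℝ) 1, g x ∈ Set.Icc (0:ℝ) 1)
    (hmono : MonotoneOn g (Set.Icc (0:ℝ) 1)) :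
    (g 1 = 1 → Lop g 1 = 1) ∧ ∀ x ∈ Set.Icc (0:ℝ) 1, Lop g x ∈ Set.Icc (0:ℝ) 1 := by
  constructor
  · intro h1
    have h3 : ((1:ℝ)+2)/3 = 1 := by norm_num
    simp only [Lop, h3, h1]
    ring
  · intro x hx
    obtain ⟨hx0, hx1⟩ := hx
    set a := g (x/3) with haa
    set b := g ((x+1)/3) with hbb
    set c := g ((x+2)/3) with hcc
    have hmem1 : x/3 ∈ Set.Icc (0:ℝ) 1 := by constructor <;> linarith
    have hmem2 : (x+1)/3 ∈ Set.Icc (0:ℝ) 1 := by constructor <;> linarith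
    have hmem3 : (x+2)/3 ∈ Set.Icc (0:ℝ) 1 := by constructor <;> linarith
    have ha := hmem _ hmem1
    have hb := hmem _ hmem2
    have hc := hmem _ hmem3
    obtain ⟨ha0, ha1⟩ := ha
    obtain ⟨hb0, hb1⟩ := hb
    obtain ⟨hc0, hc1⟩ := hc
    have hab : a ≤ b := hmono hmem1 hmem2 (by linarith)
    have hbc : b ≤ c := hmono hmem2 hmem3 (by linarith)
    have key : Lop g x = ((x+3)/4)*c^3 + 2*((x+2)/4)*(b^2*(1-c))
        + ((x+1)/4)*(a*(1-c)*(1+c-2*b)) := by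
      simp only [Lop]; ring
    have h1 : (0:ℝ) ≤ c^3 := by positivity
    have h2 : (0:ℝ) ≤ b^2*(1-c) := by
      apply mul_nonneg (by positivity); linarith
    have h3 : (0:ℝ) ≤ a*(1-c)*(1+c-2*b) := by
      apply mul_nonneg (mul_nonneg ha0 (by linarith)); linarith
    constructor
    · rw [key]
      have : (0:ℝ) ≤ (x+3)/4 := by linarith
      nlinarith [mul_nonneg this h1, mul_nonneg (show (0:ℝ) ≤ (x+2)/4 by linarith) h2,
        mul_nonneg (show (0:ℝ) ≤ (x+1)/4 by linarith) h3]
    · rw [key]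
      have e1 : ((x+3)/4)*c^3 ≤ c^3 := by nlinarith
      have e2 : 2*((x+2)/4)*(b^2*(1-c)) ≤ 2*(b^2*(1-c)) := by nlinarith
      have e3 : ((x+1)/4)*(a*(1-c)*(1+c-2*b)) ≤ a*(1-c)*(1+c-2*b) := by nlinarith
      have e4 : a*(1-c)*(1+c-2*b) ≤ b*(1-c)*(1+c-2*b) := by
        apply mul_le_mul_of_nonneg_right _ (by linarith)
        apply mul_le_mul_of_nonneg_right hab (by linarith)
      have e5 : c^3 + 2*(b^2*(1-c)) + b*(1-c)*(1+c-2*b) ≤ 1 := by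
        nlinarith [mul_nonneg (mul_nonneg (show (0:ℝ) ≤ c - b by linarith)
          (show (0:ℝ) ≤ 1-c by linarith)) (show (0:ℝ) ≤ 1+c by linarith),
          show (0:ℝ) ≤ 1 - c by linarith]
      linarith
end

section
/- Let f₁ and f₂ be convex increasing functions on [0,1] with f₁ differentiable and f₁(1) = f₂(1). Suppose there is a finite sequence 1 = c₀ > c₁ > ⋯ > c_n = 0 such that f₂(c_{j+1}) ≤ f₁(c_j) − (c_j − c_{j+1})·f₁'(c_j) for all 0 ≤ j < n. Then f₁(x) ≥ f₂(x) for all x ∈ [0,1]. -/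
/-!
On each mesh interval `[c (j+1), c j]` the convex function `f₂` lies below the tangent line of
`f₁` at `c j`: at the left end by hypothesis, at the right end because `f₂ (c j) ≤ f₁ (c j)`, and
a convex function below an affine one at both ends of a segment stays below it in between. The
tangent line in turn lies below the convex `f₁`. The mesh inequalities `f₂ (c j) ≤ f₁ (c j)` come
from `f₁ 1 = f₂ 1` for `j = 0`, and otherwise from the hypothesis at `j - 1` and the same tangent
bound.
-/

open Set

theorem ConvexOn.add_mul_sub_le_of_hasDerivAt {S : Set ℝ} {f : ℝ → ℝ} {f' a y : ℝ}
    (hf : ConvexOn ℝ S f) (ha : a ∈ S) (hy : y ∈ S) (hd : HasDerivAt f f' a) :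
    f a + f' * (y - a) ≤ f y := by
  rcases lt_trichotomy a y with hay | rfl | hya
  · have := hf.le_slope_of_hasDerivAt ha hy hay hd
    rw [slope_def_field, le_div_iff₀ (sub_pos.mpr hay)] at this
    linarith
  · simp
  · have := hf.slope_le_of_hasDerivAt hy ha hya hd
    rw [slope_def_field, div_le_iff₀ (sub_pos.mpr hya)] at this
    linarith

theorem concaveOn_add_mul_sub {s : Set ℝ} (hs : Convex ℝ s) (a b m : ℝ) :
    ConcaveOn ℝ s (fun y => b + m * (y - a)) := by
  refine ⟨hs, fun x _ y _ p q _ _ hpq => le_of_eq ?_⟩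
  simp only [smul_eq_mul]
  linear_combination (b - m * a) * hpq

theorem ConvexOn.le_of_concaveOn_of_mem_segment {𝕜 E β : Type*} [Semiring 𝕜] [PartialOrder 𝕜]
    [AddCommMonoid E] [AddCommGroup β] [LinearOrder β] [IsOrderedAddMonoid β] [SMul 𝕜 E]
    [Module 𝕜 β] [PosSMulStrictMono 𝕜 β] {s : Set E} {f g : E → β}
    (hf : ConvexOn 𝕜 s f) (hg : ConcaveOn 𝕜 s g) {x y z : E} (hx : x ∈ s) (hy : y ∈ s)
    (hfgx : f x ≤ g x) (hfgy : f y ≤ g y) (hz : z ∈ segment 𝕜 x y) : f z ≤ g z :=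
  sub_nonpos.mp <| ((hf.sub hg).le_on_segment hx hy hz).trans <|
    max_le (sub_nonpos.mpr hfgx) (sub_nonpos.mpr hfgy)

theorem exists_lt_mem_Icc_succ_of_mem_Icc {α : Type*} [LinearOrder α] {c : ℕ → α} {n : ℕ}
    (hn : 0 < n) {x : α} (hx : x ∈ Icc (c n) (c 0)) : ∃ j < n, x ∈ Icc (c (j + 1)) (c j) := by
  induction n with
  | zero => exact absurd hn (lt_irrefl 0)
  | succ n ih =>
    rcases le_or_gt x (c n) with hxn | hnx
    · exact ⟨n, n.lt_succ_self, hx.1, hxn⟩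
    · rcases Nat.eq_zero_or_pos n with rfl | hn
      · exact ⟨0, Nat.one_pos, hx⟩
      · obtain ⟨j, hj, hxj⟩ := ih hn ⟨hnx.le, hx.2⟩
        exact ⟨j, hj.trans n.lt_succ_self, hxj⟩

theorem stmt8_general (f₁ f₂ f₁' : ℝ → ℝ) (n : ℕ) (c : ℕ → ℝ)
    (hconv₁ : ConvexOn ℝ (Set.Icc (0:ℝ) 1) f₁)
    (hconv₂ : ConvexOn ℝ (Set.Icc (0:ℝ) 1) f₂)
    (hderiv : ∀ x ∈ Set.Icc (0:ℝ) 1, HasDerivAt f₁ (f₁' x) x)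
    (heq : f₁ 1 = f₂ 1)
    (hc0 : c 0 = 1) (hcn : c n = 0)
    (hdec : ∀ j < n, c (j+1) < c j)
    (hineq : ∀ j < n, f₂ (c (j+1)) ≤ f₁ (c j) - (c j - c (j+1)) * f₁' (c j)) :
    ∀ x ∈ Set.Icc (0:ℝ) 1, f₂ x ≤ f₁ x := by
  have hn : 0 < n := Nat.pos_of_ne_zero <| by rintro rfl; simp [hc0] at hcn
  have hanti : AntitoneOn c (Iic n) := (strictAntiOn_Iic_of_succ_lt hdec).antitoneOn
  have hmem : ∀ j ≤ n, c j ∈ Icc (0:ℝ) 1 := fun j hj =>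
    hc0 ▸ hcn ▸ ⟨hanti hj (mem_Iic.mpr le_rfl) hj, hanti (Nat.zero_le n) hj (Nat.zero_le j)⟩
  have htangent : ∀ j ≤ n, ∀ y ∈ Icc (0:ℝ) 1, f₁ (c j) + f₁' (c j) * (y - c j) ≤ f₁ y :=
    fun j hj y hy => hconv₁.add_mul_sub_le_of_hasDerivAt (hmem j hj) hy (hderiv _ (hmem j hj))
  have hineq' : ∀ j < n, f₂ (c (j + 1)) ≤ f₁ (c j) + f₁' (c j) * (c (j + 1) - c j) :=
    fun j hj => (hineq j hj).trans_eq (by ring)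
  have hmesh : ∀ j ≤ n, f₂ (c j) ≤ f₁ (c j)
    | 0, _ => by rw [hc0, heq]
    | j + 1, hj => (hineq' j hj).trans (htangent j (Nat.le_of_succ_le hj) _ (hmem _ hj))
  intro x hx
  obtain ⟨j, hj, hxj⟩ := exists_lt_mem_Icc_succ_of_mem_Icc hn (hcn ▸ hc0 ▸ hx)
  calc f₂ x ≤ f₁ (c j) + f₁' (c j) * (x - c j) :=
        hconv₂.le_of_concaveOn_of_mem_segment (concaveOn_add_mul_sub (convex_Icc 0 1) _ _ _)
          (hmem _ hj) (hmem j hj.le) (hineq' j hj) (by simpa using hmesh j hj.le)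
          (by rwa [segment_eq_Icc (hdec j hj).le])
    _ ≤ f₁ x := htangent j hj.le x hx

theorem stmt8 (f₁ f₂ f₁' : ℝ → ℝ) (n : ℕ) (c : ℕ → ℝ)
    (hconv₁ : ConvexOn ℝ (Set.Icc (0:ℝ) 1) f₁)
    (hconv₂ : ConvexOn ℝ (Set.Icc (0:ℝ) 1) f₂)
    (hmono₁ : MonotoneOn f₁ (Set.Icc (0:ℝ) 1))
    (hmono₂ : MonotoneOn f₂ (Set.Icc (0:ℝ) 1))
    (hderiv : ∀ x ∈ Set.Icc (0:ℝ) 1, HasDerivAt f₁ (f₁' x) x)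
    (heq : f₁ 1 = f₂ 1)
    (hc0 : c 0 = 1) (hcn : c n = 0)
    (hdec : ∀ j < n, c (j+1) < c j)
    (hineq : ∀ j < n, f₂ (c (j+1)) ≤ f₁ (c j) - (c j - c (j+1)) * f₁' (c j)) :
    ∀ x ∈ Set.Icc (0:ℝ) 1, f₂ x ≤ f₁ x :=
  stmt8_general f₁ f₂ f₁' n c hconv₁ hconv₂ hderiv heq hc0 hcn hdec hineq
end

section
/- The function a ↦ (13/24)·a^{−1/4} + (7/12)·a^{9/4}·e^{−a/2} + (85/18)·a^{9/4}·e^{−2a/3} is strictly decreasing for a ≥ 9/2. -/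
open Real Set

theorem stmt13 :
    StrictAntiOn (fun a : ℝ =>
      (13/24) * a ^ (-(1:ℝ)/4) + (7/12) * a ^ ((9:ℝ)/4) * Real.exp (-a/2)
      + (85/18) * a ^ ((9:ℝ)/4) * Real.exp (-(2*a)/3))
    (Set.Ici ((9:ℝ)/2)) := by
  have hderiv : ∀ x : ℝ, 0 < x → HasDerivAt (fun a : ℝ =>
      (13/24) * a ^ (-(1:ℝ)/4) + (7/12) * a ^ ((9:ℝ)/4) * Real.exp (-a/2)
      + (85/18) * a ^ ((9:ℝ)/4) * Real.exp (-(2*a)/3))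
      ((13/24) * (-(1:ℝ)/4 * x ^ (-(1:ℝ)/4 - 1))
       + (((7/12) * ((9:ℝ)/4 * x ^ ((9:ℝ)/4 - 1))) * Real.exp (-x/2)
          + ((7/12) * x ^ ((9:ℝ)/4)) * (Real.exp (-x/2) * (-1/2)))
       + (((85/18) * ((9:ℝ)/4 * x ^ ((9:ℝ)/4 - 1))) * Real.exp (-(2*x)/3)
          + ((85/18) * x ^ ((9:ℝ)/4)) * (Real.exp (-(2*x)/3) * (-2/3)))) x := by
    intro x hx
    have h1 := Real.hasDerivAt_rpow_const (x := x) (p := -(1:ℝ)/4) (Or.inl hx.ne')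
    have h2 := Real.hasDerivAt_rpow_const (x := x) (p := (9:ℝ)/4) (Or.inl hx.ne')
    have hg1 : HasDerivAt (fun a : ℝ => -a/2) (-1/2 : ℝ) x := by
      simpa using ((hasDerivAt_id x).neg.div_const 2)
    have hg2 : HasDerivAt (fun a : ℝ => -(2*a)/3) (-2/3 : ℝ) x := by
      have := (((hasDerivAt_id x).const_mul 2).neg.div_const 3)
      simpa using this
    have he1 := hg1.exp
    have he2 := hg2.exp
    exact ((h1.const_mul _).add ((h2.const_mul _).mul he1)).add
      ((h2.const_mul _).mul he2)
  apply strictAntiOn_of_deriv_neg (convex_Ici _)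
  · intro x hx
    have hx0 : (0:ℝ) < x := lt_of_lt_of_le (by norm_num) hx
    exact (hderiv x hx0).continuousAt.continuousWithinAt
  · intro x hx
    rw [interior_Ici] at hx
    have hx' : (9:ℝ)/2 < x := hx
    have hx0 : (0:ℝ) < x := lt_trans (by norm_num) hx
    rw [(hderiv x hx0).deriv]
    have e1 : (-(1:ℝ)/4 - 1) = -((5:ℝ)/4) := by norm_num
    have e2 : ((9:ℝ)/4 - 1) = (5:ℝ)/4 := by norm_num
    have e3 : x ^ ((9:ℝ)/4) = x * x ^ ((5:ℝ)/4) := by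
      rw [show (9:ℝ)/4 = 1 + 5/4 by norm_num, Real.rpow_add hx0, Real.rpow_one]
    rw [e1, e2, e3]
    have hN : 0 < x ^ (-((5:ℝ)/4)) := Real.rpow_pos_of_pos hx0 _
    have hP : 0 < x ^ ((5:ℝ)/4) := Real.rpow_pos_of_pos hx0 _
    have hE1 : 0 < Real.exp (-x/2) := Real.exp_pos _
    have hE2 : 0 < Real.exp (-(2*x)/3) := Real.exp_pos _
    have t2 : 0 ≤ Real.exp (-x/2) * x ^ ((5:ℝ)/4) * (x - 9/2) :=
      mul_nonneg (mul_nonneg hE1.le hP.le) (by linarith)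
    have t3 : 0 ≤ Real.exp (-(2*x)/3) * x ^ ((5:ℝ)/4) * (x - 27/8) :=
      mul_nonneg (mul_nonneg hE2.le hP.le) (by linarith)
    nlinarith [t2, t3, hN]
end
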